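/- The partition 𝒫 is regular-sparse with respect to A if and only if the minimum of the total patch-wise sparseness Σ_{k=1}^K s(ψ_k;𝒫) over all decompositions A = Σ_{k=1}^K ψ_k ψ_kᵀ equals Σ_{m=1}^M K_m, where K_m = rank(A_mm). -/

import Mathlib

open Matrix BigOperators

/-- Restriction of a vector `ψ ∈ ℝ^N` to the indices in a patch `Pm`. -/
def restrictPatch {N : ℕ} (Pm : Finset (Fin N)) (ψ : Fin N → ℝ) : ↥Pm → ℝ :=
  fun i => ψ i

/-- Patch-wise sparseness `s(ψ;𝒫)`: the number of patches on which `ψ` is nonzero. -/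
noncomputable def sparseness {N M : ℕ} (P : Fin M → Finset (Fin N)) (ψ : Fin N → ℝ) : ℕ :=
  {m : Fin M | restrictPatch (P m) ψ ≠ 0}.ncard

/-- `P` is a partition of `{1,...,N}` into disjoint nonempty patches. -/
def IsPartition {N M : ℕ} (P : Fin M → Finset (Fin N)) : Prop :=
  (∀ m, (P m).Nonempty) ∧ (∀ m m', m ≠ m' → Disjoint (P m) (P m')) ∧ (∀ i, ∃ m, i ∈ P m)

/-- `K_m`: the rank of the principal submatrix `A_mm`. -/
noncomputable def patchRank {N : ℕ} (A : Matrix (Fin N) (Fin N) ℝ) (Pm : Finset (Fin N)) : ℕ :=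
  (A.submatrix (fun i : ↥Pm => (i : Fin N)) (fun i : ↥Pm => (i : Fin N))).rank

/-- The partition `P` is regular-sparse w.r.t. `A`. -/
def RegularSparse {N M : ℕ} (K : ℕ) (A : Matrix (Fin N) (Fin N) ℝ)
    (P : Fin M → Finset (Fin N)) : Prop :=
  ∃ g : Fin K → Fin N → ℝ,
    A = ∑ k, vecMulVec (g k) (g k) ∧
    ∀ m, LinearIndependent ℝ
      (fun k : {k : Fin K // restrictPatch (P m) (g k) ≠ 0} =>
        restrictPatch (P m) (g (k : Fin K)))

/-- `(ψ_1,...,ψ_K)` is a set of intrinsic sparse modes of `A` w.r.t. the partition `P`. -/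
def IsISM {N M K : ℕ} (A : Matrix (Fin N) (Fin N) ℝ) (P : Fin M → Finset (Fin N))
    (ψ : Fin K → Fin N → ℝ) : Prop :=
  A = ∑ k, vecMulVec (ψ k) (ψ k) ∧
  ∀ φ : Fin K → Fin N → ℝ, A = ∑ k, vecMulVec (φ k) (φ k) →
    ∑ k, sparseness P (ψ k) ≤ ∑ k, sparseness P (φ k)

/-- Two modes are unidentifiable on partition `P`: supported on exactly the same patches. -/
def Unidentifiable {N M : ℕ} (P : Fin M → Finset (Fin N)) (g g' : Fin N → ℝ) : Prop :=
  ∀ m, restrictPatch (P m) g ≠ 0 ↔ restrictPatch (P m) g' ≠ 0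

/-- The block diagonal matrix `H_ext = diag(H_1, ..., H_M)`. -/
def Hext {N M : ℕ} (P : Fin M → Finset (Fin N)) (Km : Fin M → ℕ)
    (H : ∀ m, Matrix ↥(P m) (Fin (Km m)) ℝ) :
    Matrix (Fin N) ((m : Fin M) × Fin (Km m)) ℝ :=
  Matrix.of fun i c => if h : i ∈ P c.1 then H c.1 ⟨i, h⟩ c.2 else 0

/-- The `(m,n)` block `Λ_mn` of a matrix indexed by `Σ m, Fin (Km m)`. -/
def ΛBlock {M : ℕ} {Km : Fin M → ℕ}
    (Λ : Matrix ((m : Fin M) × Fin (Km m)) ((m : Fin M) × Fin (Km m)) ℝ) (m n : Fin M) :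
    Matrix (Fin (Km m)) (Fin (Km n)) ℝ :=
  Matrix.of fun i j => Λ ⟨m, i⟩ ⟨n, j⟩

/-- Joint diagonalization objective: sum of squares of off-diagonal entries of `Vᵀ S_n V`. -/
noncomputable def offDiagObj {n M : ℕ} (S : Fin M → Matrix (Fin n) (Fin n) ℝ)
    (V : Matrix (Fin n) (Fin n) ℝ) : ℝ :=
  ∑ p, ∑ i, ∑ j, if i ≠ j then ((Vᵀ * S p * V) i j) ^ 2 else 0

/-!
Restricting `A = ∑ ψ_k ψ_kᵀ` to a patch gives `A_mm = ∑ (ψ_k|P_m)(ψ_k|P_m)ᵀ`, so `K_m` is the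
dimension of the span of the restrictions `ψ_k|P_m`, which is at most the number of nonzero
ones. Counting the pairs `(k, m)` with `ψ_k|P_m ≠ 0` in two ways, the total sparseness is the sum
of these numbers, hence at least `∑ K_m`, with equality exactly when on every patch the nonzero
restrictions are linearly independent.
-/

open Submodule

section NonzeroSubfamily

variable {R V κ : Type*} [DivisionRing R] [AddCommGroup V] [Module R V]

theorem span_range_ne_zero_subfamily (v : κ → V) :
    span R (Set.range fun k : {k // v k ≠ 0} => v k) = span R (Set.range v) := by
  have hrange : (Set.range fun k : {k // v k ≠ 0} => v k) = Set.range v \ {0} := by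
    aesop
  rw [hrange, span_sdiff_singleton_zero]

theorem finrank_span_range_le_ncard_ne_zero [Finite κ] (v : κ → V) :
    Module.finrank R (span R (Set.range v)) ≤ {k | v k ≠ 0}.ncard := by
  have := Fintype.ofFinite {k // v k ≠ 0}
  rw [← span_range_ne_zero_subfamily, ← Nat.card_coe_set_eq]
  exact (finrank_range_le_card _).trans_eq Nat.card_eq_fintype_card.symm

theorem linearIndependent_ne_zero_subfamily_iff [Finite κ] (v : κ → V) :
    LinearIndependent R (fun k : {k // v k ≠ 0} => v k) ↔
      Module.finrank R (span R (Set.range v)) = {k | v k ≠ 0}.ncard := by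
  have := Fintype.ofFinite {k // v k ≠ 0}
  rw [linearIndependent_iff_card_eq_finrank_span, Set.finrank, span_range_ne_zero_subfamily,
    ← Nat.card_coe_set_eq, eq_comm]
  exact Eq.congr_right Nat.card_eq_fintype_card.symm

end NonzeroSubfamily

theorem sum_vecMulVec_self_eq_transpose_mul {R κ ι : Type*} [CommSemiring R] [Fintype κ]
    (v : κ → ι → R) : ∑ k, vecMulVec (v k) (v k) = (of v)ᵀ * of v := by
  ext i j
  simp [mul_apply, Matrix.sum_apply, vecMulVec_apply]

theorem rank_sum_vecMulVec_self {R κ ι : Type*} [Field R] [LinearOrder R]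
    [IsStrictOrderedRing R] [Fintype κ] [Fintype ι] (v : κ → ι → R) :
    (∑ k, vecMulVec (v k) (v k)).rank = Module.finrank R (span R (Set.range v)) := by
  rw [sum_vecMulVec_self_eq_transpose_mul, rank_transpose_mul_self, rank_eq_finrank_span_row]
  rfl

section Patches

variable {N M K : ℕ}

theorem submatrix_sum_vecMulVec_self (Pm : Finset (Fin N)) (ψ : Fin K → Fin N → ℝ) :
    (∑ k, vecMulVec (ψ k) (ψ k)).submatrix
        (fun i : ↥Pm => (i : Fin N)) (fun i : ↥Pm => (i : Fin N)) =
      ∑ k, vecMulVec (restrictPatch Pm (ψ k)) (restrictPatch Pm (ψ k)) := by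
  ext i j
  simp [Matrix.sum_apply, vecMulVec_apply, restrictPatch]

theorem patchRank_eq_finrank_span_restrictPatch {A : Matrix (Fin N) (Fin N) ℝ}
    {ψ : Fin K → Fin N → ℝ} (hψ : A = ∑ k, vecMulVec (ψ k) (ψ k)) (Pm : Finset (Fin N)) :
    patchRank A Pm = Module.finrank ℝ (span ℝ (Set.range fun k => restrictPatch Pm (ψ k))) := by
  rw [patchRank, hψ, submatrix_sum_vecMulVec_self, rank_sum_vecMulVec_self]

theorem sum_sparseness_eq_sum_ncard (P : Fin M → Finset (Fin N)) (ψ : Fin K → Fin N → ℝ) :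
    ∑ k, sparseness P (ψ k) = ∑ m, {k | restrictPatch (P m) (ψ k) ≠ 0}.ncard := by
  classical
  simp only [sparseness, Set.ncard_eq_toFinset_card', Set.toFinset_ofPred]
  exact Finset.sum_card_bipartiteAbove_eq_sum_card_bipartiteBelow
    (r := fun k m => restrictPatch (P m) (ψ k) ≠ 0)

theorem patchRank_le_ncard {A : Matrix (Fin N) (Fin N) ℝ} {ψ : Fin K → Fin N → ℝ}
    (hψ : A = ∑ k, vecMulVec (ψ k) (ψ k)) (Pm : Finset (Fin N)) :
    patchRank A Pm ≤ {k | restrictPatch Pm (ψ k) ≠ 0}.ncard := by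
  rw [patchRank_eq_finrank_span_restrictPatch hψ]
  exact finrank_span_range_le_ncard_ne_zero _

theorem sum_patchRank_le_sum_sparseness {A : Matrix (Fin N) (Fin N) ℝ}
    (P : Fin M → Finset (Fin N)) {ψ : Fin K → Fin N → ℝ}
    (hψ : A = ∑ k, vecMulVec (ψ k) (ψ k)) :
    ∑ m, patchRank A (P m) ≤ ∑ k, sparseness P (ψ k) := by
  rw [sum_sparseness_eq_sum_ncard]
  exact Finset.sum_le_sum fun m _ => patchRank_le_ncard hψ (P m)

theorem sum_sparseness_eq_sum_patchRank_iff {A : Matrix (Fin N) (Fin N) ℝ}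
    (P : Fin M → Finset (Fin N)) {ψ : Fin K → Fin N → ℝ}
    (hψ : A = ∑ k, vecMulVec (ψ k) (ψ k)) :
    ∑ k, sparseness P (ψ k) = ∑ m, patchRank A (P m) ↔
      ∀ m, LinearIndependent ℝ (fun k : {k // restrictPatch (P m) (ψ k) ≠ 0} =>
        restrictPatch (P m) (ψ k)) := by
  simp only [linearIndependent_ne_zero_subfamily_iff (fun k => restrictPatch (P _) (ψ k)),
    ← patchRank_eq_finrank_span_restrictPatch hψ, sum_sparseness_eq_sum_ncard, eq_comm]
  rw [Finset.sum_eq_sum_iff_of_le fun m _ => patchRank_le_ncard hψ (P m)]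
  simp only [Finset.mem_univ, true_implies]

end Patches

theorem regularSparse_iff_min_total_sparseness_eq_sum_patchRank_general
    {N M K : ℕ} (A : Matrix (Fin N) (Fin N) ℝ)
    (P : Fin M → Finset (Fin N)) :
    RegularSparse K A P ↔
      IsLeast {s : ℕ | ∃ ψ : Fin K → Fin N → ℝ,
          A = ∑ k, vecMulVec (ψ k) (ψ k) ∧ s = ∑ k, sparseness P (ψ k)}
        (∑ m, patchRank A (P m)) := by
  constructor
  · rintro ⟨g, hg, hli⟩
    refine ⟨⟨g, hg, ((sum_sparseness_eq_sum_patchRank_iff P hg).2 hli).symm⟩, ?_⟩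
    rintro s ⟨ψ, hψ, rfl⟩
    exact sum_patchRank_le_sum_sparseness P hψ
  · rintro ⟨⟨ψ, hψ, hs⟩, -⟩
    exact ⟨ψ, hψ, (sum_sparseness_eq_sum_patchRank_iff P hψ).1 hs.symm⟩

/-- `𝒫` is regular-sparse with respect to `A` iff the minimum of the total
patch-wise sparseness `Σ_k s(ψ_k;𝒫)` over all decompositions `A = Σ_{k=1}^K ψ_k ψ_kᵀ`
equals `Σ_m K_m` with `K_m = rank(A_mm)`, i.e. iff `Σ_m K_m` is attained and is a lower
bound for all such totals. -/
theorem regularSparse_iff_min_total_sparseness_eq_sum_patchRank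
    {N M K : ℕ} (A : Matrix (Fin N) (Fin N) ℝ)
    (hA : A.PosSemidef) (hrank : A.rank = K)
    (P : Fin M → Finset (Fin N)) (hP : IsPartition P) :
    RegularSparse K A P ↔
      IsLeast {s : ℕ | ∃ ψ : Fin K → Fin N → ℝ,
          A = ∑ k, vecMulVec (ψ k) (ψ k) ∧ s = ∑ k, sparseness P (ψ k)}
        (∑ m, patchRank A (P m)) :=
  regularSparse_iff_min_total_sparseness_eq_sum_patchRank_general A P
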